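/- arXiv:0802.1681 — 4 statements merged into one kernel-verified Lean document; each statement's English description precedes it below -/
import Mathlib

section
/- If G = (β_1 x_1 + ... + β_n x_n)^k is the k-th power of a linear form, then for any homogeneous polynomial F of degree k in n variables, ⟨F, G⟩ = F(β_1,...,β_n), i.e., the pairing of F with G equals F evaluated at the coefficient vector of the linear form. -/
/-! By the multinomial theorem the `p`-th coefficient of `(∑ i, C (β i) * X i) ^ k` is
`(k choose p) * β ^ p`, so the weight `1 / (k choose p)` in the apolar form cancels and the
pairing becomes `∑ p, coeff p F * β ^ p = F(β)`. -/

open scoped BigOperators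

/-- The apolar bilinear form on degree-k forms: writing
`F = ∑ (k choose p) a_p x^p` and `G = ∑ (k choose p) b_p x^p`, it equals
`∑ (k choose p) a_p b_p`, i.e. `∑_p coeff_p F * coeff_p G / (k choose p)`. -/
noncomputable def apolar {n : ℕ} (F G : MvPolynomial (Fin n) ℂ) : ℂ :=
  ∑ p ∈ F.support,
    (F.coeff p * G.coeff p) / (Nat.multinomial Finset.univ (fun i => p i) : ℂ)

namespace MvPolynomial

theorem coeff_sum_C_mul_X_pow_of_degree_eq {R σ : Type*} [CommSemiring R] [Fintype σ]
    (a : σ → R) {s : σ →₀ ℕ} {k : ℕ} (hs : s.degree = k) :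
    coeff s ((∑ i, C (a i) * X i) ^ k) = Nat.multinomial Finset.univ s * ∏ i, a i ^ s i := by
  simp_rw [← smul_eq_C_mul, coeff_linearCombination_X_pow_of_fintype,
    Finsupp.multinomial_eq_of_support_subset (Finset.subset_univ s.support),
    Finsupp.prod_fintype s _ fun _ => pow_zero _]
  exact if_pos hs

end MvPolynomial

open MvPolynomial in
/-- Pairing a degree-k form F with the k-th power of a linear form evaluates F
at the coefficient vector of the linear form. -/
theorem apolar_pow_linear_eq_eval (k n : ℕ) (F : MvPolynomial (Fin n) ℂ)
    (hF : F.IsHomogeneous k) (β : Fin n → ℂ) :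
    apolar F ((∑ i, MvPolynomial.C (β i) * MvPolynomial.X i) ^ k) =
      MvPolynomial.eval β F := by
  rw [apolar, eval_eq']
  refine Finset.sum_congr rfl fun p hp => ?_
  rw [coeff_sum_C_mul_X_pow_of_degree_eq β (hF.degree_eq_sum_deg_support hp).symm]
  have hm : (Nat.multinomial Finset.univ p : ℂ) ≠ 0 := mod_cast (Nat.multinomial_pos _ _).ne'
  field_simp
end

section
/- Let L_1,...,L_r be linear forms in n variables over C such that no two are scalar multiples of each other. Then for any k ≥ r-1, the powers L_1^k, ..., L_r^k are linearly independent in C[x_1,...,x_n]_k. -/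
/-!
For a fixed index `i`, pick for every `j ≠ i` a direction `w j` with `L j (w j) = 0` but
`L i (w j) ≠ 0`, which exists because `L i` is not proportional to `L j`. The composite of the
`r - 1` directional derivatives `∂_{w j}` sends `L l ^ k` to
`k (k - 1) ⋯ (k - r + 2) · ∏ⱼ L l (w j) · L l ^ (k - r + 1)`: this vanishes for `l ≠ i`, and for
`l = i` it is nonzero because `k ≥ r - 1`. Applied to a linear relation among the `L l ^ k`, it
isolates the coefficient of `L i ^ k`, which must therefore be zero.
-/

open scoped BigOperators

/-- The linear form with coefficient vector β. -/
noncomputable def linForm {n : ℕ} (β : Fin n → ℂ) : MvPolynomial (Fin n) ℂ :=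
  ∑ j, MvPolynomial.C (β j) * MvPolynomial.X j

open MvPolynomial Matrix

theorem exists_dotProduct_eq_zero_ne_zero {K m : Type*} [Field K] [Fintype m] {β γ : m → K}
    (h : ∀ c : K, γ ≠ c • β) : ∃ v, β ⬝ᵥ v = 0 ∧ γ ⬝ᵥ v ≠ 0 := by
  classical
  by_contra! hker
  let e := dotProductEquiv K m
  have hle : ⨅ _ : Unit, LinearMap.ker (e β) ≤ LinearMap.ker (e γ) := fun v hv => by
    simpa [e] using hker v (by simpa [e] using hv)
  obtain ⟨c, hc⟩ := Submodule.mem_span_singleton.1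
    (by simpa using mem_span_of_iInf_ker_le_ker hle)
  exact h c (e.injective (by rw [map_smul, hc]))

section DirDeriv

variable {σ R : Type*} [CommSemiring R] [Fintype σ]

noncomputable def dirDeriv (v : σ → R) : Derivation R (MvPolynomial σ R) (MvPolynomial σ R) :=
  ∑ j, v j • pderiv j

theorem dirDeriv_apply (v : σ → R) (p : MvPolynomial σ R) :
    dirDeriv v p = ∑ j, v j • pderiv j p := by
  rw [dirDeriv, ← Derivation.coeFnAddMonoidHom_apply, map_sum, Finset.sum_apply]
  rfl

end DirDeriv

section LinForm

variable {n : ℕ}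

theorem dirDeriv_linForm (v β : Fin n → ℂ) : dirDeriv v (linForm β) = C (β ⬝ᵥ v) := by
  simp [dirDeriv_apply, linForm, pderiv_X, Pi.single_apply, dotProduct, smul_eq_C_mul, mul_comm]

theorem dirDeriv_linForm_pow (v β : Fin n → ℂ) (k : ℕ) :
    dirDeriv v (linForm β ^ k) = ((k : ℂ) * (β ⬝ᵥ v)) • linForm β ^ (k - 1) := by
  rw [Derivation.leibniz_pow, dirDeriv_linForm, smul_eq_C_mul, nsmul_eq_mul, smul_eq_mul,
    map_mul, map_natCast]
  ring

theorem linForm_ne_zero {β : Fin n → ℂ} (hβ : β ≠ 0) : linForm β ≠ 0 := by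
  intro h
  refine hβ (dotProduct_eq_zero β fun v => C_injective (Fin n) ℂ ?_)
  rw [← dirDeriv_linForm, h, map_zero, C_0]

theorem list_prod_dirDeriv_linForm_pow (ws : List (Fin n → ℂ)) (β : Fin n → ℂ) (k : ℕ) :
    (ws.map fun v => (dirDeriv v).toLinearMap).prod (linForm β ^ k) =
      ((k.descFactorial ws.length : ℂ) * (ws.map (β ⬝ᵥ ·)).prod) •
        linForm β ^ (k - ws.length) := by
  induction ws with
  | nil => simp
  | cons v ws ih =>
    rw [List.map_cons, List.prod_cons, Module.End.mul_apply, ih, LinearMap.map_smul,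
      Derivation.coeFn_coe, dirDeriv_linForm_pow, smul_smul, List.length_cons,
      Nat.descFactorial_succ, Nat.sub_sub, List.map_cons, List.prod_cons]
    rw [Nat.cast_mul]
    congr 1
    ring

end LinForm

/-- Powers of pairwise non-proportional nonzero linear forms are linearly
independent, as soon as k ≥ r - 1. -/
theorem pow_linForm_linearIndependent (n r k : ℕ) (hk : r - 1 ≤ k)
    (L : Fin r → Fin n → ℂ) (hL0 : ∀ i, L i ≠ 0)
    (hL : ∀ i j, i ≠ j → ∀ c : ℂ, L i ≠ c • L j) :
    LinearIndependent ℂ (fun i => (linForm (L i)) ^ k) := by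
  rw [Fintype.linearIndependent_iff]
  intro g hg i
  choose! w hw_ker hw_ne using fun j (hji : j ≠ i) =>
    exists_dotProduct_eq_zero_ne_zero (hL i j hji.symm)
  set ws := (Finset.univ.erase i).toList.map w
  have hlen : ws.length = r - 1 := by simp [ws]
  have hD := congrArg (ws.map fun v => (dirDeriv v).toLinearMap).prod hg
  rw [map_sum, map_zero, Finset.sum_eq_single i] at hD
  · rw [map_smul, list_prod_dirDeriv_linForm_pow, smul_smul, hlen] at hD
    have hcoef : (k.descFactorial (r - 1) : ℂ) * (ws.map (L i ⬝ᵥ ·)).prod ≠ 0 :=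
      mul_ne_zero (by exact_mod_cast Nat.descFactorial_eq_zero_iff_lt.not.2 (not_lt.2 hk))
        (List.prod_ne_zero (by simpa [ws] using hw_ne))
    have hpow := pow_ne_zero (k - (r - 1)) (linForm_ne_zero (hL0 i))
    exact (mul_eq_zero.1 ((smul_eq_zero.1 hD).resolve_right hpow)).resolve_right hcoef
  · intro j _ hji
    rw [map_smul, list_prod_dirDeriv_linForm_pow, List.prod_eq_zero, mul_zero, zero_smul,
      smul_zero]
    simpa [ws] using ⟨j, hji, hw_ker j hji⟩
  · simp
end

section
/- If A ∈ S^k(C^n) has symmetric rank 2, then its tensor rank also equals 2. In particular, if A = y_1^{⊗k} + y_2^{⊗k} with rank_S(A) = 2, then y_1 and y_2 are linearly independent, and rank(A) = 2. -/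
/-!
If `y₁, y₂` were dependent, `y₁^{⊗k} + y₂^{⊗k}` would be a multiple of one power `z^{⊗k}`, hence
itself a `k`-th power since `ℂ` has `k`-th roots, of symmetric rank at most 1. For `k = 1` the sum
is the power `(y₁ + y₂)^{⊗1}`, so `k ≥ 2`. Contracting the last `k - 1` slots against a covector
`φ` maps `y^{⊗k}` to `(y ⬝ φ)^{k-1} y` and a rank-one tensor `v₀ ⊗ ⋯ ⊗ v_{k-1}` into the line
`ℂ v₀`. A covector killing `y₂` but not `y₁`, and one killing `y₁` but not `y₂`, would then put the
independent vectors `y₁` and `y₂` on one line; so `y₁^{⊗k} + y₂^{⊗k}` has tensor rank 2.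
-/

open scoped BigOperators

abbrev Tensor (k n : ℕ) := (Fin k → Fin n) → ℂ

/-- Action of a permutation on tensor factors (array form). -/
def permAct {k n : ℕ} (σ : Equiv.Perm (Fin k)) (A : Tensor k n) : Tensor k n :=
  fun j => A (j ∘ σ)

/-- The symmetrization operator `S = (1/k!) ∑_{σ ∈ S_k} σ`. -/
noncomputable def symmetrize {k n : ℕ} (A : Tensor k n) : Tensor k n :=
  ((k.factorial : ℂ)⁻¹) • ∑ σ : Equiv.Perm (Fin k), permAct σ A

/-- `y^{⊗ k}`, the k-th tensor (outer) power of a vector. -/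
def tpow {k n : ℕ} (y : Fin n → ℂ) : Tensor k n := fun j => ∏ l, y (j l)

/-- Outer product `v 0 ⊗ v 1 ⊗ ... ⊗ v (k-1)`. -/
def outer {k n : ℕ} (v : Fin k → Fin n → ℂ) : Tensor k n := fun j => ∏ l, v l (j l)

/-- Symmetric rank. -/
noncomputable def symRank {k n : ℕ} (A : Tensor k n) : ℕ :=
  sInf {s | ∃ y : Fin s → Fin n → ℂ, A = ∑ i, tpow (y i)}

/-- Tensor rank. -/
noncomputable def tRank {k n : ℕ} (A : Tensor k n) : ℕ :=
  sInf {r | ∃ v : Fin r → Fin k → Fin n → ℂ, A = ∑ i, outer (v i)}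

section SymmetricRank

variable {k n : ℕ}

theorem tpow_smul (c : ℂ) (y : Fin n → ℂ) : (tpow (c • y) : Tensor k n) = c ^ k • tpow y := by
  funext j
  simp [tpow, Finset.prod_mul_distrib, Finset.prod_const]

theorem tpow_zero (hk : k ≠ 0) : (tpow 0 : Tensor k n) = 0 := by
  funext j
  simp [tpow, Finset.prod_const, zero_pow hk]

theorem tpow_add_of_order_one (y₁ y₂ : Fin n → ℂ) :
    (tpow (y₁ + y₂) : Tensor 1 n) = tpow y₁ + tpow y₂ := by
  funext j
  simp [tpow]

theorem exists_tpow_eq_smul_tpow (hk : k ≠ 0) (c : ℂ) (y : Fin n → ℂ) :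
    ∃ z, (tpow z : Tensor k n) = c • tpow y := by
  obtain ⟨β, rfl⟩ := IsAlgClosed.exists_pow_nat_eq c (Nat.pos_of_ne_zero hk)
  exact ⟨β • y, tpow_smul β y⟩

theorem symRank_tpow_le_one (y : Fin n → ℂ) : symRank (tpow y : Tensor k n) ≤ 1 :=
  Nat.sInf_le ⟨fun _ => y, (Fin.sum_univ_one fun _ => tpow y).symm⟩

theorem exists_eq_sum_tpow_of_symRank_eq {A : Tensor k n} {s : ℕ} (h : symRank A = s)
    (hs : s ≠ 0) : ∃ y : Fin s → Fin n → ℂ, A = ∑ i, tpow (y i) :=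
  h ▸ Nat.sInf_mem (Nat.nonempty_of_pos_sInf (h ▸ Nat.pos_of_ne_zero hs))

theorem linearIndependent_of_symRank_eq_two (hk : k ≠ 0) {A : Tensor k n} (h : symRank A = 2)
    {y₁ y₂ : Fin n → ℂ} (hA : A = tpow y₁ + tpow y₂) : LinearIndependent ℂ ![y₁, y₂] := by
  by_contra hdep
  obtain ⟨c, z, rfl⟩ : ∃ (c : ℂ) (z : Fin n → ℂ), A = c • tpow z := by
    rw [linearIndependent_fin2] at hdep
    simp only [Matrix.cons_val_one, Matrix.cons_val_zero, not_and_or, not_forall, not_not]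
      at hdep
    rcases hdep with rfl | ⟨a, rfl⟩
    · exact ⟨1, y₁, by rw [hA, tpow_zero hk, add_zero, one_smul]⟩
    · exact ⟨a ^ k + 1, y₂, by rw [hA, tpow_smul, add_smul, one_smul]⟩
  obtain ⟨w, hw⟩ := exists_tpow_eq_smul_tpow hk c z
  have := hw ▸ symRank_tpow_le_one (k := k) w
  omega

end SymmetricRank

theorem exists_dotProduct_eq_zero_ne_zero_s15 {K ι : Type*} [Field K] [Fintype ι] [DecidableEq ι]
    {x y : ι → K} (h : x ∉ K ∙ y) : ∃ φ : ι → K, y ⬝ᵥ φ = 0 ∧ x ⬝ᵥ φ ≠ 0 := by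
  obtain ⟨f, hfx, hfy⟩ := Submodule.exists_dual_map_eq_bot_of_notMem h inferInstance
  have hf : ∀ v, v ⬝ᵥ (dotProductEquiv K ι).symm f = f v := fun v => by
    rw [dotProduct_comm, ← dotProductEquiv_apply_apply, LinearEquiv.apply_symm_apply]
  refine ⟨(dotProductEquiv K ι).symm f, ?_, by rwa [hf]⟩
  rw [hf, ← Submodule.mem_bot K, ← hfy]
  exact Submodule.mem_map_of_mem (Submodule.mem_span_singleton_self y)

section Contraction

variable {m n : ℕ}

def contractTail (φ : Fin n → ℂ) (A : Tensor (m + 1) n) : Fin n → ℂ :=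
  fun i => ∑ t : Fin m → Fin n, A (Fin.cons i t) * ∏ l, φ (t l)

theorem contractTail_add (φ : Fin n → ℂ) (A B : Tensor (m + 1) n) :
    contractTail φ (A + B) = contractTail φ A + contractTail φ B := by
  funext i
  simp [contractTail, add_mul, Finset.sum_add_distrib]

theorem contractTail_tpow (φ y : Fin n → ℂ) :
    contractTail φ (tpow y : Tensor (m + 1) n) = (y ⬝ᵥ φ) ^ m • y := by
  funext i
  simp only [contractTail, tpow, Fin.prod_univ_succ, Fin.cons_zero, Fin.cons_succ, Pi.smul_apply,
    smul_eq_mul, dotProduct, Finset.sum_pow', Fintype.piFinset_univ, Finset.sum_mul]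
  refine Finset.sum_congr rfl fun t _ => ?_
  rw [Finset.prod_mul_distrib]
  ring

theorem contractTail_outer (φ : Fin n → ℂ) (v : Fin (m + 1) → Fin n → ℂ) :
    contractTail φ (outer v) = (∏ l : Fin m, v l.succ ⬝ᵥ φ) • v 0 := by
  funext i
  simp only [contractTail, outer, Fin.prod_univ_succ, Fin.cons_zero, Fin.cons_succ, Pi.smul_apply,
    smul_eq_mul, dotProduct, Finset.prod_univ_sum, Fintype.piFinset_univ, Finset.sum_mul]
  refine Finset.sum_congr rfl fun t _ => ?_
  rw [Finset.prod_mul_distrib]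
  ring

theorem mem_span_of_tpow_add_tpow_eq_outer {x z : Fin n → ℂ} (hxz : x ∉ ℂ ∙ z)
    {v : Fin (m + 2) → Fin n → ℂ} (h : tpow x + tpow z = outer v) : x ∈ ℂ ∙ v 0 := by
  obtain ⟨φ, hzφ, hxφ⟩ := exists_dotProduct_eq_zero_ne_zero_s15 hxz
  have hcontr := congrArg (contractTail φ) h
  rw [contractTail_add, contractTail_tpow, contractTail_tpow, hzφ, zero_pow m.succ_ne_zero,
    zero_smul, add_zero, contractTail_outer] at hcontr
  rw [← Submodule.smul_mem_iff _ (pow_ne_zero (m + 1) hxφ), hcontr]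
  exact Submodule.smul_mem _ _ (Submodule.mem_span_singleton_self _)

theorem tpow_add_tpow_ne_outer {y₁ y₂ : Fin n → ℂ} (hy : LinearIndependent ℂ ![y₁, y₂])
    (v : Fin (m + 2) → Fin n → ℂ) : (tpow y₁ + tpow y₂ : Tensor (m + 2) n) ≠ outer v := by
  intro h
  have hy₁ : y₁ ∉ ℂ ∙ y₂ := by
    simpa [Submodule.mem_span_singleton] using (linearIndependent_fin2.1 hy).2
  have hy₂ : y₂ ∉ ℂ ∙ y₁ := by
    simpa [Submodule.mem_span_singleton] using
      (linearIndependent_fin2.1 (LinearIndependent.pair_symm_iff.1 hy)).2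
  have hle : Submodule.span ℂ (Set.range ![y₁, y₂]) ≤ ℂ ∙ v 0 := by
    rw [Submodule.span_le, Set.range_subset_iff, Fin.forall_fin_two]
    exact ⟨mem_span_of_tpow_add_tpow_eq_outer hy₁ h,
      mem_span_of_tpow_add_tpow_eq_outer hy₂ ((add_comm _ _).trans h)⟩
  have := (Submodule.finrank_mono hle).trans (finrank_span_le_card {v 0})
  simp [finrank_span_eq_card hy] at this

theorem tRank_tpow_add_tpow {y₁ y₂ : Fin n → ℂ} (hy : LinearIndependent ℂ ![y₁, y₂]) :
    tRank (tpow y₁ + tpow y₂ : Tensor (m + 2) n) = 2 := by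
  have h₂ : 2 ∈ {r | ∃ v : Fin r → Fin (m + 2) → Fin n → ℂ,
      tpow y₁ + tpow y₂ = ∑ i, outer (v i)} :=
    ⟨![fun _ => y₁, fun _ => y₂], by rw [Fin.sum_univ_two]; rfl⟩
  refine le_antisymm (Nat.sInf_le h₂) (le_csInf ⟨2, h₂⟩ fun r ⟨v, hv⟩ => ?_)
  by_contra! hr
  interval_cases r
  · exact tpow_add_tpow_ne_outer hy 0 (hv.trans <| by ext j; simp [outer, Fin.prod_univ_succ])
  · exact tpow_add_tpow_ne_outer hy (v 0) (hv.trans (Fin.sum_univ_one _))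

end Contraction

/-- A symmetric tensor of symmetric rank 2 has tensor rank 2; moreover, in any
decomposition A = y₁^{⊗k} + y₂^{⊗k} the vectors y₁ and y₂ must be linearly
independent. -/
theorem tRank_of_symRank_two (k n : ℕ) (hk : 1 ≤ k) (A : Tensor k n)
    (h : symRank A = 2) :
    tRank A = 2 ∧
    ∀ y₁ y₂ : Fin n → ℂ, A = tpow y₁ + tpow y₂ →
      LinearIndependent ℂ ![y₁, y₂] := by
  have hindep : ∀ y₁ y₂ : Fin n → ℂ, A = tpow y₁ + tpow y₂ → LinearIndependent ℂ ![y₁, y₂] :=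
    fun _ _ => linearIndependent_of_symRank_eq_two (by omega) h
  obtain ⟨y, hA⟩ := exists_eq_sum_tpow_of_symRank_eq h two_ne_zero
  rw [Fin.sum_univ_two] at hA
  have hk₁ : k ≠ 1 := by
    rintro rfl
    have := symRank_tpow_le_one (k := 1) (y 0 + y 1)
    rw [tpow_add_of_order_one, ← hA, h] at this
    omega
  obtain ⟨m, rfl⟩ : ∃ m, k = m + 2 := ⟨k - 2, by omega⟩
  refine ⟨?_, hindep⟩
  rw [hA]
  exact tRank_tpow_add_tpow (hindep _ _ hA)
end

section
/- For k ≥ 2, the binary monomial x y^{k-1} ∈ C[x,y]_k can be written as a linear combination of exactly k k-th powers of pairwise non-proportional linear forms, and cannot be written with fewer: its symmetric rank (Waring rank) is k. -/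
open scoped BigOperators

/-!
Upper bound: for a primitive `k`-th root of unity `ζ`,
`x y^(k-1) = k⁻² ∑_j ζ^j (x + ζ^j y)^k`, because the coefficient of `x^m y^(k-m)` on the right
is `C(k,m) k⁻² ∑_j ζ^(j(k-m+1))`, which vanishes unless `k ∣ k - m + 1`, i.e. `m = 1`.

Lower bound, by apolarity: if `F = ∑ μ_i ℓ_(β_i)^n`, then for every form `G` of degree `n` the
sum `∑ μ_i G(β_i)` is the apolar pairing `⟨G, F⟩`, which depends on `F` only. Differentiating
`x y^(k-1) = ∑ λ_i ℓ_(β_i)^k` in `x` gives `y^(k-1) = ∑ k λ_i β_i0 ℓ_(β_i)^(k-1)`. With at most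
`k - 1` summands, the product `G` of a power of `y` and of the forms `β_i0 y - β_i1 x` with
`β_i0 ≠ 0` has degree `k - 1` and vanishes at every `β_i` whose coefficient `k λ_i β_i0` is
nonzero, so `0 = ∑ k λ_i β_i0 G(β_i) = ⟨G, y^(k-1)⟩ = G(0,1) = ∏ β_i0 ≠ 0`.
-/

open MvPolynomial Finset

section Apolarity

variable {n : ℕ}

lemma eval_linForm (v β : Fin n → ℂ) : eval v (linForm β) = β ⬝ᵥ v := by
  simp [linForm, dotProduct]

lemma isHomogeneous_linForm (β : Fin n → ℂ) : (linForm β).IsHomogeneous 1 :=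
  IsHomogeneous.sum _ _ _ fun j _ => (isHomogeneous_X ℂ j).C_mul (β j)

lemma pderiv_linForm (β : Fin n → ℂ) (j : Fin n) : pderiv j (linForm β) = C (β j) := by
  simp [linForm, pderiv_X, Pi.single_apply]

lemma coeff_linForm_pow (β : Fin n → ℂ) (d : Fin n →₀ ℕ) (k : ℕ) :
    coeff d (linForm β ^ k) =
      if d.sum (fun _ m => m) = k then d.multinomial * d.prod (fun j m => β j ^ m) else 0 := by
  simp only [linForm, ← smul_eq_C_mul, coeff_linearCombination_X_pow_of_fintype]

noncomputable def apolarPairing (G : MvPolynomial (Fin n) ℂ) : MvPolynomial (Fin n) ℂ →ₗ[ℂ] ℂ :=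
  ∑ d ∈ G.support, (coeff d G / d.multinomial) • lcoeff ℂ d

lemma apolarPairing_linForm_pow {G : MvPolynomial (Fin n) ℂ} {k : ℕ} (hG : G.IsHomogeneous k)
    (β : Fin n → ℂ) : apolarPairing G (linForm β ^ k) = eval β G := by
  rw [eval_eq, apolarPairing, LinearMap.sum_apply]
  refine sum_congr rfl fun d hd => ?_
  have hdeg : d.sum (fun _ m => m) = k := (hG.degree_eq_sum_deg_support hd).symm
  have hmult : (d.multinomial : ℂ) ≠ 0 := Nat.cast_ne_zero.mpr (Nat.multinomial_pos _ _).ne'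
  rw [LinearMap.smul_apply, lcoeff_apply, coeff_linForm_pow, if_pos hdeg, smul_eq_mul]
  field_simp
  rfl

lemma apolarPairing_sum_C_mul_linForm_pow {ι : Type*} [Fintype ι] {G : MvPolynomial (Fin n) ℂ}
    {k : ℕ} (hG : G.IsHomogeneous k) (μ : ι → ℂ) (β : ι → Fin n → ℂ) :
    apolarPairing G (∑ i, C (μ i) * linForm (β i) ^ k) = ∑ i, μ i * eval (β i) G := by
  simp only [← smul_eq_C_mul, map_sum, map_smul, apolarPairing_linForm_pow hG, smul_eq_mul]

lemma pderiv_sum_C_mul_linForm_pow {ι : Type*} [Fintype ι] (μ : ι → ℂ) (β : ι → Fin n → ℂ)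
    (j : Fin n) (k : ℕ) :
    pderiv j (∑ i, C (μ i) * linForm (β i) ^ (k + 1)) =
      ∑ i, C ((k + 1) * μ i * β i j) * linForm (β i) ^ k := by
  simp only [map_sum, Derivation.leibniz, Derivation.leibniz_pow, pderiv_C, pderiv_linForm]
  refine sum_congr rfl fun i _ => ?_
  simp only [smul_eq_mul, nsmul_eq_mul, add_tsub_cancel_right, map_mul, map_add, map_natCast,
    map_one]
  push_cast
  ring

end Apolarity

lemma linForm_fin_two (β : Fin 2 → ℂ) : linForm β = C (β 0) * X 0 + C (β 1) * X 1 := by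
  simp [linForm, Fin.sum_univ_two]

lemma sum_C_mul_linForm_pow_eq {ι : Type*} [Fintype ι] (μ : ι → ℂ) (β : ι → Fin 2 → ℂ) (k : ℕ) :
    ∑ i, C (μ i) * linForm (β i) ^ k =
      ∑ m ∈ range (k + 1), C (k.choose m * ∑ i, μ i * β i 0 ^ m * β i 1 ^ (k - m)) *
        X 0 ^ m * X 1 ^ (k - m) := by
  simp only [linForm_fin_two, add_pow, mul_sum]
  rw [sum_comm]
  refine sum_congr rfl fun m _ => ?_
  simp only [map_sum, sum_mul]
  refine sum_congr rfl fun i _ => ?_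
  simp only [map_mul, map_pow, map_natCast]
  ring

lemma IsPrimitiveRoot.sum_range_pow_pow {K : Type*} [Field K] {k : ℕ} {ζ : K}
    (hζ : IsPrimitiveRoot ζ k) (c : ℕ) :
    ∑ j ∈ range k, (ζ ^ c) ^ j = if k ∣ c then (k : K) else 0 := by
  split_ifs with hc
  · simp [(hζ.pow_eq_one_iff_dvd c).mpr hc]
  · have hne : ζ ^ c ≠ 1 := fun h => hc ((hζ.pow_eq_one_iff_dvd c).mp h)
    rw [geom_sum_eq hne, ← pow_mul, mul_comm, pow_mul, hζ.pow_eq_one, one_pow, sub_self, zero_div]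

lemma X_mul_X_pow_eq_sum_rootsOfUnity {k : ℕ} (hk : 2 ≤ k) {ζ : ℂ} (hζ : IsPrimitiveRoot ζ k) :
    (X 0 * X 1 ^ (k - 1) : MvPolynomial (Fin 2) ℂ) =
      ∑ j : Fin k, C (ζ ^ (j : ℕ) / k ^ 2) * linForm ![1, ζ ^ (j : ℕ)] ^ k := by
  have hk0 : (k : ℂ) ≠ 0 := by exact_mod_cast (by omega : k ≠ 0)
  have hmoment : ∀ m ≤ k, (k.choose m : ℂ) *
      ∑ j : Fin k, ζ ^ (j : ℕ) / k ^ 2 * ![1, ζ ^ (j : ℕ)] 0 ^ m * ![1, ζ ^ (j : ℕ)] 1 ^ (k - m) =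
        if m = 1 then 1 else 0 := by
    intro m hm
    have hterm : ∀ j : Fin k, ζ ^ (j : ℕ) / k ^ 2 * ![1, ζ ^ (j : ℕ)] 0 ^ m *
        ![1, ζ ^ (j : ℕ)] 1 ^ (k - m) = (ζ ^ (k - m + 1)) ^ (j : ℕ) / k ^ 2 := by
      intro j
      simp only [Matrix.cons_val_zero, Matrix.cons_val_one, one_pow, mul_one]
      ring
    rw [sum_congr rfl fun j _ => hterm j, ← sum_div,
      Fin.sum_univ_eq_sum_range (fun j => (ζ ^ (k - m + 1)) ^ j), hζ.sum_range_pow_pow]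
    by_cases hm1 : m = 1
    · subst hm1
      rw [if_pos (by rw [Nat.sub_add_cancel (by omega)]), if_pos rfl, Nat.choose_one_right]
      field_simp
    · have hndvd : ¬ k ∣ k - m + 1 := by
        rintro ⟨c, hc⟩
        rcases c with _ | _ | c
        · omega
        · omega
        · have : k * 2 ≤ k * (c + 1 + 1) := Nat.mul_le_mul_left k (by omega)
          rw [← hc] at this
          omega
      rw [if_neg hndvd, if_neg hm1, zero_div, mul_zero]
  rw [sum_C_mul_linForm_pow_eq, sum_eq_single 1]
  · rw [hmoment 1 (by omega), if_pos rfl]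
    simp
  · intro m hm hm1
    rw [hmoment m (by simpa [Nat.lt_succ_iff] using hm), if_neg hm1]
    simp
  · intro h
    exact absurd (mem_range.mpr (by omega)) h

lemma lt_card_of_X_pow_eq_sum {ι : Type*} [Fintype ι] {n : ℕ} (μ : ι → ℂ) (β : ι → Fin 2 → ℂ)
    (hμ : ∀ i, β i 0 = 0 → μ i = 0)
    (h : (X 1 : MvPolynomial (Fin 2) ℂ) ^ n = ∑ i, C (μ i) * linForm (β i) ^ n) :
    n < Fintype.card ι := by
  classical
  by_contra! hle
  set S := univ.filter fun i => β i 0 ≠ 0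
  have hS : #S ≤ n := (card_filter_le _ _).trans hle
  set G : MvPolynomial (Fin 2) ℂ := X 1 ^ (n - #S) * ∏ i ∈ S, linForm ![-β i 1, β i 0]
  have hG : G.IsHomogeneous n := by
    have := (isHomogeneous_X_pow (1 : Fin 2) (n - #S)).mul
      (IsHomogeneous.prod S _ (fun _ => 1) fun i _ => isHomogeneous_linForm ![-β i 1, β i 0])
    simpa [Nat.sub_add_cancel hS] using this
  have hvanish : ∀ i, μ i * eval (β i) G = 0 := by
    intro i
    by_cases hi : β i 0 = 0
    · rw [hμ i hi, zero_mul]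
    · simp only [G, map_mul, map_prod]
      refine mul_eq_zero_of_right _ (mul_eq_zero_of_right _ ?_)
      refine prod_eq_zero (mem_filter.mpr ⟨mem_univ i, hi⟩) ?_
      simp only [eval_linForm, dotProduct, Fin.sum_univ_two, Matrix.cons_val_zero,
        Matrix.cons_val_one]
      ring
  have hG_e1 : eval ![0, 1] G ≠ 0 := by
    simp only [G, map_mul, map_pow, map_prod, eval_X, eval_linForm]
    refine mul_ne_zero (by simp) (prod_ne_zero_iff.mpr fun i hi => ?_)
    simpa [dotProduct, Fin.sum_univ_two] using (mem_filter.mp hi).2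
  have hX1 : (X 1 : MvPolynomial (Fin 2) ℂ) = linForm ![0, 1] := by
    simp [linForm_fin_two]
  apply hG_e1
  rw [← apolarPairing_linForm_pow hG, ← hX1, h, apolarPairing_sum_C_mul_linForm_pow hG]
  exact sum_eq_zero fun i _ => hvanish i

lemma lt_card_of_X_mul_X_pow_eq_sum {ι : Type*} [Fintype ι] {n : ℕ} (lam : ι → ℂ)
    (β : ι → Fin 2 → ℂ)
    (h : (X 0 * X 1 ^ n : MvPolynomial (Fin 2) ℂ) = ∑ i, C (lam i) * linForm (β i) ^ (n + 1)) :
    n < Fintype.card ι := by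
  have hlhs : pderiv 0 (X 0 * X 1 ^ n : MvPolynomial (Fin 2) ℂ) = X 1 ^ n := by simp
  have hderiv := congrArg (pderiv 0) h
  rw [hlhs, pderiv_sum_C_mul_linForm_pow] at hderiv
  exact lt_card_of_X_pow_eq_sum _ β (fun i hi => by rw [hi, mul_zero]) hderiv

/-- The Waring (symmetric) rank of the binary monomial x y^{k-1} is exactly k:
it is a linear combination of k k-th powers of pairwise non-proportional
linear forms, and of no fewer k-th powers of linear forms. -/
theorem waringRank_monomial (k : ℕ) (hk : 2 ≤ k) :
    (∃ (lam : Fin k → ℂ) (β : Fin k → Fin 2 → ℂ),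
      (∀ i j, i ≠ j → ∀ c : ℂ, β i ≠ c • β j) ∧
      MvPolynomial.X 0 * MvPolynomial.X 1 ^ (k - 1) =
        ∑ i, MvPolynomial.C (lam i) * (linForm (β i)) ^ k) ∧
    (∀ r : ℕ, r < k →
      ¬ ∃ (lam : Fin r → ℂ) (β : Fin r → Fin 2 → ℂ),
        MvPolynomial.X 0 * MvPolynomial.X 1 ^ (k - 1) =
          ∑ i, MvPolynomial.C (lam i) * (linForm (β i)) ^ k) := by
  obtain ⟨ζ, hζ⟩ : ∃ ζ : ℂ, IsPrimitiveRoot ζ k :=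
    ⟨_, Complex.isPrimitiveRoot_exp k (by omega)⟩
  refine ⟨⟨fun j => ζ ^ (j : ℕ) / k ^ 2, fun j => ![1, ζ ^ (j : ℕ)], ?_,
    X_mul_X_pow_eq_sum_rootsOfUnity hk hζ⟩, ?_⟩
  · intro i j hij c hc
    have hc1 : c = 1 := by simpa using (congrFun hc 0).symm
    exact hij (Fin.ext (hζ.pow_inj i.isLt j.isLt (by simpa [hc1] using congrFun hc 1)))
  · rintro r hr ⟨lam, β, h⟩
    have hkr := lt_card_of_X_mul_X_pow_eq_sum (n := k - 1) lam β
      (by rwa [Nat.sub_add_cancel (by omega)])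
    rw [Fintype.card_fin] at hkr
    omega
end
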